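/- arXiv:1804.07465 — 3 statements merged into one kernel-verified Lean document; each statement's English description precedes it below -/
import Mathlib

section
/- Let U be a deductively closed theory and ▵ a sentence operator satisfying the Kreisel condition (U ⊢ ▵A iff U ⊢ A) and provable Σ⁰₁-completeness for the sentence S in question (U ⊢ S → ▵S). If U + ¬▵⊥ ⊢ S then U ⊢ S, i.e., U is conservative over U + ¬▵⊥ for such sentences S. (Abstractly: if U ⊢ ¬▵⊥ → S and U ⊢ S → ▵S and U ⊢ ⊥ → anything with L2-style distribution so that U ⊢ ▵⊥ → ▵S, then U ⊢ ▵S, hence by Kreisel U ⊢ S.) -/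
/-! Under `¬▵⊥` the hypotheses give `S` and hence `▵S`; under `▵⊥` distribution applied to
`▵(⊥ → S)` gives `▵S` as well. So `U ⊢ ▵S`, and the Kreisel condition yields `U ⊢ S`. -/

/-- Propositional modal formulas with two modalities `box` (□) and `tri` (▵). -/
inductive Fml : Type where
  | bot : Fml
  | var : ℕ → Fml
  | imp : Fml → Fml → Fml
  | box : Fml → Fml
  | tri : Fml → Fml
  deriving DecidableEq

namespace Fml

def neg (a : Fml) : Fml := a.imp bot
def conj (a b : Fml) : Fml := (a.imp b.neg).neg
def disj (a b : Fml) : Fml := a.neg.imp b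
def iff_ (a b : Fml) : Fml := conj (a.imp b) (b.imp a)

/-- Boolean evaluation treating `bot`/`imp` classically and everything else
(variables and boxed formulas) as atoms. -/
def eval (v : Fml → Bool) : Fml → Bool
  | bot => false
  | imp a b => !(eval v a) || eval v b
  | f => v f

/-- Classical (propositional) tautologies. -/
def Taut (f : Fml) : Prop := ∀ v, eval v f = true

end Fml

namespace Fml

theorem taut_bot_imp (a : Fml) : Taut (bot.imp a) := fun _ => rfl

theorem taut_imp_trans (a b c : Fml) : Taut ((a.imp b).imp ((b.imp c).imp (a.imp c))) := by
  intro v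
  simp only [eval]
  cases eval v a <;> cases eval v b <;> cases eval v c <;> rfl

theorem taut_neg_imp_elim (a b : Fml) : Taut ((a.neg.imp b).imp ((a.imp b).imp b)) := by
  intro v
  simp only [neg, eval]
  cases eval v a <;> cases eval v b <;> rfl

theorem taut_conj_imp_elim (a b c : Fml) :
    Taut (((conj a b).imp c).imp (b.imp (a.imp c))) := by
  intro v
  simp only [conj, neg, eval]
  cases eval v a <;> cases eval v b <;> cases eval v c <;> rfl

end Fml

theorem mp_of_taut₂ {U : Fml → Prop} (taut : ∀ f, Fml.Taut f → U f)
    (mp : ∀ a b : Fml, U (a.imp b) → U a → U b) {a b c : Fml}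
    (h : Fml.Taut (a.imp (b.imp c))) (ha : U a) (hb : U b) : U c :=
  mp _ _ (mp _ _ (taut _ h) ha) hb

theorem tri_bot_imp_tri {U : Fml → Prop} (taut : ∀ f, Fml.Taut f → U f)
    (mp : ∀ a b : Fml, U (a.imp b) → U a → U b) (L1 : ∀ a : Fml, U a → U a.tri)
    (L2 : ∀ a b : Fml, U ((Fml.conj a.tri (a.imp b).tri).imp b.tri)) (b : Fml) :
    U (Fml.bot.tri.imp b.tri) :=
  mp_of_taut₂ taut mp (Fml.taut_conj_imp_elim _ _ _) (L2 Fml.bot b)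
    (L1 _ (taut _ (Fml.taut_bot_imp b)))

/-- If ▵ satisfies L1, L2 and the Kreisel condition over a deductively
closed theory `U`, and `U ⊢ S → ▵S` (provable Σ⁰₁-completeness for `S`), then
`U + ¬▵⊥ ⊢ S` implies `U ⊢ S`. -/
theorem sigma1_conservativity
    (U : Fml → Prop)
    (taut : ∀ f, Fml.Taut f → U f)
    (mp : ∀ a b : Fml, U (a.imp b) → U a → U b)
    (L1 : ∀ a : Fml, U a → U a.tri)
    (L2 : ∀ a b : Fml, U ((Fml.conj a.tri (a.imp b).tri).imp b.tri))
    (kreisel : ∀ a : Fml, U a.tri ↔ U a) :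
    ∀ S : Fml,
      U ((Fml.neg (Fml.tri Fml.bot)).imp S) →
      U (S.imp S.tri) →
      U S := by
  intro S hcons hsigma
  have hneg : U ((Fml.neg (Fml.tri Fml.bot)).imp S.tri) :=
    mp_of_taut₂ taut mp (Fml.taut_imp_trans _ _ _) hcons hsigma
  have hpos : U ((Fml.tri Fml.bot).imp S.tri) := tri_bot_imp_tri taut mp L1 L2 S
  exact (kreisel S).1 (mp_of_taut₂ taut mp (Fml.taut_neg_imp_elim _ _) hneg hpos)
end

section
/- Let U be a consistent deductively closed theory and ▵ a sentence operator satisfying L1, L2, formalized Löb (U ⊢ ▵(▵A→A) → ▵A), the Kreisel condition, and provable completeness U ⊢ ▵⊥ → ▵▵⊥. Then the sentence ▵⊥ is independent of U: U ⊬ ▵⊥ and U ⊬ ¬▵⊥. -/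
/-- Let `U` be consistent and deductively closed, and ▵ satisfy L1, L2,
formalized Löb, the Kreisel condition, and provable completeness `U ⊢ ▵⊥ → ▵▵⊥`.
Then ▵⊥ is independent of `U`: `U ⊬ ▵⊥` and `U ⊬ ¬▵⊥`. -/
theorem tri_bot_independent
    (U : Fml → Prop)
    (taut : ∀ f, Fml.Taut f → U f)
    (mp : ∀ a b : Fml, U (a.imp b) → U a → U b)
    (consis : ¬ U Fml.bot)
    (L1 : ∀ a : Fml, U a → U a.tri)
    (L2 : ∀ a b : Fml, U ((Fml.conj a.tri (a.imp b).tri).imp b.tri))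
    (lob : ∀ a : Fml, U ((Fml.tri (a.tri.imp a)).imp a.tri))
    (kreisel : ∀ a : Fml, U a.tri ↔ U a)
    (complete : U ((Fml.tri Fml.bot).imp (Fml.tri (Fml.tri Fml.bot)))) :
    ¬ U (Fml.tri Fml.bot) ∧ ¬ U (Fml.neg (Fml.tri Fml.bot)) := by
  constructor
  · intro h
    exact consis ((kreisel Fml.bot).mp h)
  · intro h
    -- h : U (▵⊥ → ⊥); Löb with a = ⊥ gives U (▵(▵⊥→⊥) → ▵⊥)
    have h1 : U (Fml.tri (Fml.tri Fml.bot |>.imp Fml.bot)) := L1 _ h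
    have h2 := mp _ _ (lob Fml.bot) h1
    exact consis (mp _ _ h h2)
end

section
/- (Kreisel condition from soundness, Theorem 'tuinsmurf') If ⟨U₀, U, α⟩ is a strict Fefermanian representation (U₀ ⊆ U, and for all sentences A: A is an axiom of U iff U₀ ⊢ α(⌜A⌝)) and both U₀ and U are sound (all their theorems are true in the standard model), then prov_α satisfies the Kreisel condition for U: U ⊢ prov_α(⌜A⌝) iff U ⊢ A. -/
/-!
Soundness of `U₀` together with Σ⁰₁-completeness of `U₀` for the sentences `α(⌜B⌝)` makes `α`
define the axioms of `U` truly, so `prov_α(⌜A⌝)` is true exactly when `U ⊢ A`. Soundness of `U`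
together with Σ⁰₁-completeness of `U` for `prov_α(⌜A⌝)` makes that truth equivalent to
`U ⊢ prov_α(⌜A⌝)`.
-/

section KreiselCondition

variable {Sent : Type} {tr : Sent → Prop}

theorem true_alpha_eq_axioms {U0 AxU : Sent → Prop} {alpha : Sent → Sent}
    (hFef : ∀ A, AxU A ↔ U0 (alpha A)) (soundU0 : ∀ A, U0 A → tr A)
    (hsigma_alpha : ∀ B, tr (alpha B) → U0 (alpha B)) :
    (fun B => tr (alpha B)) = AxU :=
  funext fun B => propext
    ⟨fun h => (hFef B).2 (hsigma_alpha B h), fun h => soundU0 _ ((hFef B).1 h)⟩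

theorem provable_iff_of_true_iff_provable {U : Sent → Prop} {pr : Sent → Sent}
    (htr : ∀ A, tr (pr A) ↔ U A) (soundU : ∀ A, U A → tr A)
    (hsigma : ∀ A, tr (pr A) → U (pr A)) (A : Sent) :
    U (pr A) ↔ U A :=
  ⟨fun h => (htr A).1 (soundU _ h), fun h => hsigma A ((htr A).2 h)⟩

end KreiselCondition

/-- Encoding: `tr` is truth in the standard model, `Der γ A` derivability of `A` from the axiom
set `γ`, `alpha A` the sentence `α(⌜A⌝)` and `pr A` the sentence `prov_α(⌜A⌝)`. -/
theorem kreisel_of_sound_fefermanian_general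
    (Sent : Type)
    (Der : (Sent → Prop) → Sent → Prop)
    (U0 U AxU : Sent → Prop)
    (tr : Sent → Prop)
    (alpha pr : Sent → Sent)
    (hFef : ∀ A, AxU A ↔ U0 (alpha A))
    (hUax : ∀ A, U A ↔ Der AxU A)
    (soundU0 : ∀ A, U0 A → tr A)
    (soundU : ∀ A, U A → tr A)
    (hpr : ∀ A, tr (pr A) ↔ Der (fun B => tr (alpha B)) A)
    (hsigma : ∀ A, tr (pr A) → U (pr A))
    (hsigma_alpha : ∀ B, tr (alpha B) → U0 (alpha B)) :
    ∀ A, U (pr A) ↔ U A := by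
  have htr : ∀ A, tr (pr A) ↔ U A := fun A => by
    rw [hpr, true_alpha_eq_axioms hFef soundU0 hsigma_alpha, ← hUax]
  exact provable_iff_of_true_iff_provable htr soundU hsigma

/-- Theorem 'tuinsmurf': if `⟨U₀, U, α⟩` is a strict Fefermanian
representation (`U₀ ⊆ U`, and `A` is an axiom of `U` iff `U₀ ⊢ α(⌜A⌝)`) and both `U₀`
and `U` are sound, then `prov_α` satisfies the Kreisel condition for `U`:
`U ⊢ prov_α(⌜A⌝)` iff `U ⊢ A`.

Abstract interface: `Sent` is the type of sentences, `tr` truth in the standard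
model, `Der γ A` derivability of `A` from the axiom set `γ`, `alpha A` the sentence
`α(⌜A⌝)`, `pr A` the sentence `prov_α(⌜A⌝)`. `hpr` is the arithmetization of
provability (`prov_α(⌜A⌝)` is true iff `A` is derivable from the sentences whose
α-code is true); `hsigma`, `hsigma_alpha` are provable Σ⁰₁-completeness for the
Σ⁰₁-sentences `pr A` and `alpha B` (using `U, U₀ ⊇ EA`). -/
theorem kreisel_of_sound_fefermanian
    (Sent : Type)
    (Der : (Sent → Prop) → Sent → Prop)
    (U0 U AxU : Sent → Prop)
    (tr : Sent → Prop)
    (alpha pr : Sent → Sent)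
    (hsub : ∀ A, U0 A → U A)
    (hFef : ∀ A, AxU A ↔ U0 (alpha A))
    (hUax : ∀ A, U A ↔ Der AxU A)
    (soundU0 : ∀ A, U0 A → tr A)
    (soundU : ∀ A, U A → tr A)
    (hpr : ∀ A, tr (pr A) ↔ Der (fun B => tr (alpha B)) A)
    (hsigma : ∀ A, tr (pr A) → U (pr A))
    (hsigma_alpha : ∀ B, tr (alpha B) → U0 (alpha B)) :
    ∀ A, U (pr A) ↔ U A :=
  kreisel_of_sound_fefermanian_general Sent Der U0 U AxU tr alpha pr hFef hUax soundU0 soundU hpr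
    hsigma hsigma_alpha
end
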